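/- Monotonicity of semi-discrete policy iteration (Proposition 2.1): assume (A1)–(A2) and N ≥ max{1, ‖f‖_∞/2}, and let (v_n^h, α_n)_{n≥0} be bounded Lipschitz solutions of the semi-discrete PI scheme. Then for every n ≥ 0, v_{n+1}^h(t,x) ≤ v_n^h(t,x) for all (t,x) ∈ [0,T]×ℝ^d. -/

import Mathlib

open scoped RealInnerProductSpace
open MeasureTheory Filter Topology

noncomputable section

abbrev Rd (d : ℕ) := EuclideanSpace ℝ (Fin d)
abbrev Rm (m : ℕ) := EuclideanSpace ℝ (Fin m)

/-- Discrete gradient `∇ʰφ` in space. -/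
def dGrad (d : ℕ) (h : ℝ) (φ : Rd d → ℝ) (x : Rd d) : Rd d :=
  (WithLp.equiv 2 (Fin d → ℝ)).symm fun i =>
    (φ (x + h • EuclideanSpace.single i 1) - φ (x - h • EuclideanSpace.single i 1)) / (2 * h)

/-- Discrete Laplacian `Δʰφ` in space. -/
def dLap (d : ℕ) (h : ℝ) (φ : Rd d → ℝ) (x : Rd d) : ℝ :=
  ∑ i, (φ (x + h • EuclideanSpace.single i 1) - 2 * φ x + φ (x - h • EuclideanSpace.single i 1)) / h ^ 2

/-!
The difference `w = v_{n+1} - v_n` is a subsolution of the linear backward equation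
`∂ₜw + ∇ʰw · f(α_{n+1}) + N h Δʰw = 0`, because `α_{n+1}` minimises the Hamiltonian at `∇ʰv_n`.
Since `N ≥ ‖f‖_∞ / 2` the scheme is monotone: `∇ʰw · f + N h Δʰw` combines the differences
`w(x ± h eᵢ) - w(x)` with nonnegative weights, so it is at most `κ (B - w)` with `κ = 2 d N / h`
whenever `w ≤ B`. Along each line `t ↦ w(t, x)` this makes `e^{-κt}(w - B)` nondecreasing, so
`w(T, ·) = 0` gives `w ≤ (1 - e^{-κT}) B` on `[0, T]`; for `B = max 0 (sup w)` this forces `B = 0`.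
-/

open Real Set

theorem dGrad_apply {d : ℕ} (h : ℝ) (φ : Rd d → ℝ) (x : Rd d) (i : Fin d) :
    dGrad d h φ x i
      = (φ (x + h • EuclideanSpace.single i 1) - φ (x - h • EuclideanSpace.single i 1)) / (2 * h) :=
  rfl

theorem dGrad_sub {d : ℕ} (h : ℝ) (φ ψ : Rd d → ℝ) (x : Rd d) :
    dGrad d h (fun y => φ y - ψ y) x = dGrad d h φ x - dGrad d h ψ x := by
  ext i
  simp only [PiLp.sub_apply, dGrad_apply]
  ring

theorem dLap_sub {d : ℕ} (h : ℝ) (φ ψ : Rd d → ℝ) (x : Rd d) :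
    dLap d h (fun y => φ y - ψ y) x = dLap d h φ x - dLap d h ψ x := by
  simp only [dLap, ← Finset.sum_sub_distrib]
  exact Finset.sum_congr rfl fun i _ => by ring

theorem policy_improvement {d : ℕ} {h N cNew cOld dV dU : ℝ} {V U : Rd d → ℝ} {gNew gOld : Rd d}
    {x : Rd d} (hmin : cNew + ⟪dGrad d h U x, gNew⟫ ≤ cOld + ⟪dGrad d h U x, gOld⟫)
    (hV : dV + cNew + ⟪dGrad d h V x, gNew⟫ = -(N * h * dLap d h V x))
    (hU : dU + cOld + ⟪dGrad d h U x, gOld⟫ = -(N * h * dLap d h U x)) :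
    0 ≤ dV - dU + ⟪dGrad d h (fun y => V y - U y) x, gNew⟫
      + N * h * dLap d h (fun y => V y - U y) x := by
  rw [dGrad_sub, dLap_sub, inner_sub_left]
  linarith

theorem centralDiff_mul_add_secondDiff_le {a b u g N h B : ℝ} (hh : 0 < h) (hg : |g| ≤ 2 * N)
    (ha : a ≤ B) (hb : b ≤ B) :
    (a - b) / (2 * h) * g + N * h * ((a - 2 * u + b) / h ^ 2) ≤ 2 * N / h * (B - u) := by
  obtain ⟨hg₁, hg₂⟩ := abs_le.mp hg
  have hplus : 0 ≤ 2 * N + g := by linarith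
  have hminus : 0 ≤ 2 * N - g := by linarith
  calc (a - b) / (2 * h) * g + N * h * ((a - 2 * u + b) / h ^ 2)
      = ((2 * N + g) * (a - u) + (2 * N - g) * (b - u)) / (2 * h) := by field_simp; ring
    _ ≤ ((2 * N + g) * (B - u) + (2 * N - g) * (B - u)) / (2 * h) := by gcongr
    _ = 2 * N / h * (B - u) := by field_simp; ring

theorem inner_dGrad_add_dLap_le {d : ℕ} {h N B : ℝ} (hh : 0 < h) {g : Rd d}
    (hg : ∀ i, |g i| ≤ 2 * N) {u : Rd d → ℝ} (hu : ∀ y, u y ≤ B) (x : Rd d) :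
    ⟪dGrad d h u x, g⟫ + N * h * dLap d h u x ≤ 2 * d * N / h * (B - u x) := by
  have hinner : ⟪dGrad d h u x, g⟫ = ∑ i, dGrad d h u x i * g i := by
    simp [PiLp.inner_apply, mul_comm]
  rw [hinner, dLap, Finset.mul_sum, ← Finset.sum_add_distrib]
  calc _ ≤ ∑ _i : Fin d, 2 * N / h * (B - u x) :=
        Finset.sum_le_sum fun i _ => centralDiff_mul_add_secondDiff_le hh (hg i) (hu _) (hu _)
    _ = 2 * d * N / h * (B - u x) := by simp; ring

theorem sub_le_exp_mul_sub_of_le_deriv {u : ℝ → ℝ} {κ B t s : ℝ} (hts : t ≤ s)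
    (hcont : ContinuousOn u (Icc t s)) (hdiff : ∀ r ∈ Ioo t s, DifferentiableAt ℝ u r)
    (hderiv : ∀ r ∈ Ioo t s, -(κ * (B - u r)) ≤ deriv u r) :
    u t - B ≤ exp (-(κ * (s - t))) * (u s - B) := by
  set φ : ℝ → ℝ := fun r => exp (-(κ * r)) * (u r - B)
  have hφ : ∀ r ∈ Ioo t s,
      HasDerivAt φ (exp (-(κ * r)) * (deriv u r + κ * (B - u r))) r := by
    intro r hr
    have hlin : HasDerivAt (fun r => -(κ * r)) (-κ) r := by
      simpa using ((hasDerivAt_id r).const_mul κ).fun_neg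
    exact (hlin.exp.mul ((hdiff r hr).hasDerivAt.sub_const B)).congr_deriv (by ring)
  have hmono : MonotoneOn φ (Icc t s) := by
    refine monotoneOn_of_deriv_nonneg (convex_Icc t s) ?_ ?_ ?_
    · exact (continuous_exp.comp (continuous_const.mul continuous_id).neg).continuousOn.mul
        (hcont.sub continuousOn_const)
    · rw [interior_Icc]
      exact fun r hr => (hφ r hr).differentiableAt.differentiableWithinAt
    · rw [interior_Icc]
      intro r hr
      rw [(hφ r hr).deriv]
      exact mul_nonneg (exp_pos _).le (by linarith [hderiv r hr])
  have hφts : exp (-(κ * t)) * (u t - B) ≤ exp (-(κ * s)) * (u s - B) :=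
    hmono (left_mem_Icc.mpr hts) (right_mem_Icc.mpr hts) hts
  calc u t - B = exp (κ * t) * (exp (-(κ * t)) * (u t - B)) := by
        rw [← mul_assoc, ← exp_add]; simp
    _ ≤ exp (κ * t) * (exp (-(κ * s)) * (u s - B)) := by gcongr
    _ = exp (-(κ * (s - t))) * (u s - B) := by
        rw [← mul_assoc, ← exp_add]; ring_nf

theorem nonpos_of_forall_upperBound_le_mul {ι : Type*} {s : Set ι} {F : ι → ℝ} {θ : ℝ}
    (hθ₀ : 0 ≤ θ) (hθ₁ : θ < 1) (hbdd : BddAbove (F '' s))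
    (H : ∀ B, 0 ≤ B → (∀ p ∈ s, F p ≤ B) → ∀ p ∈ s, F p ≤ θ * B) :
    ∀ p ∈ s, F p ≤ 0 := by
  set B := sSup (insert 0 (F '' s))
  have hB : BddAbove (insert 0 (F '' s)) := hbdd.insert 0
  have hB₀ : 0 ≤ B := le_csSup hB (mem_insert _ _)
  have hFB : ∀ p ∈ s, F p ≤ B := fun p hp =>
    le_csSup hB (mem_insert_of_mem _ (mem_image_of_mem F hp))
  have hBθ : B ≤ θ * B := by
    refine csSup_le (insert_nonempty _ _) ?_
    rintro _ (rfl | ⟨p, hp, rfl⟩)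
    · positivity
    · exact H B hB₀ hFB p hp
  intro p hp
  nlinarith [hFB p hp]

theorem le_zero_of_subsolution {d : ℕ} {h N T : ℝ} (hh : 0 < h) (hN : 0 ≤ N) (hT : 0 ≤ T)
    {w : ℝ → Rd d → ℝ} {g : ℝ → Rd d → Rd d} (hg : ∀ r x i, |g r x i| ≤ 2 * N)
    (hbdd : ∃ M, ∀ t x, w t x ≤ M)
    (hcont : ∀ x, ContinuousOn (fun t => w t x) (Icc 0 T))
    (hdiff : ∀ x, ∀ r ∈ Ioo 0 T, DifferentiableAt ℝ (fun t => w t x) r)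
    (hsub : ∀ x, ∀ r ∈ Ioo 0 T,
      0 ≤ deriv (fun t => w t x) r + ⟪dGrad d h (w r) x, g r x⟫ + N * h * dLap d h (w r) x)
    (hterm : ∀ x, w T x ≤ 0) :
    ∀ t ∈ Icc 0 T, ∀ x, w t x ≤ 0 := by
  set κ := 2 * d * N / h
  have hκ : 0 ≤ κ := by positivity
  have hexpT : exp (-(κ * T)) ≤ 1 := exp_le_one_iff.mpr (by nlinarith)
  obtain ⟨M, hM⟩ := hbdd
  have key := nonpos_of_forall_upperBound_le_mul (s := Icc 0 T ×ˢ univ)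
    (F := fun p => w p.1 p.2) (θ := 1 - exp (-(κ * T))) (by linarith)
    (by linarith [exp_pos (-(κ * T))]) ⟨M, by rintro _ ⟨p, -, rfl⟩; exact hM p.1 p.2⟩ ?_
  · exact fun t ht x => key (t, x) ⟨ht, trivial⟩
  rintro B hB₀ hB ⟨t, x⟩ ⟨ht, -⟩
  have hline := sub_le_exp_mul_sub_of_le_deriv (u := fun t => w t x) (κ := κ) (B := B) ht.2
    ((hcont x).mono (Icc_subset_Icc_left ht.1))
    (fun r hr => hdiff x r ⟨ht.1.trans_lt hr.1, hr.2⟩) fun r hr => by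
      have hr₀ : r ∈ Ioo 0 T := ⟨ht.1.trans_lt hr.1, hr.2⟩
      have := inner_dGrad_add_dLap_le hh (hg r x)
        (fun y => hB (r, y) ⟨Ioo_subset_Icc_self hr₀, trivial⟩) x
      linarith [hsub x r hr₀]
  have hexp : exp (-(κ * T)) ≤ exp (-(κ * (T - t))) := exp_le_exp.mpr (by nlinarith [ht.1])
  have hwT := hterm x
  dsimp only at hline ⊢
  nlinarith [exp_pos (-(κ * (T - t)))]

theorem semidiscrete_PI_monotone_general
    (T : ℝ) (hT : 1 ≤ T) (d m : ℕ)
    (A : Set (Rm m))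
    (c : ℝ → Rd d → Rm m → ℝ) (f : ℝ → Rd d → Rm m → Rd d) (q : Rd d → ℝ)
    (α : ℝ → Rd d → Rd d → Rm m) (α0 : ℝ → Rd d → Rm m) (Fb : ℝ)
    (hfb : ∀ t x a, ‖f t x a‖ ≤ Fb)
    (hαA : ∀ t x p, α t x p ∈ A)
    (hαmin : ∀ t x p, ∀ a ∈ A, c t x (α t x p) + ⟪p, f t x (α t x p)⟫ ≤ c t x a + ⟪p, f t x a⟫)
    (hα0A : ∀ t x, α0 t x ∈ A)
    (h N : ℝ) (hh : h ∈ Set.Ioo (0:ℝ) 1) (hN : max 1 (Fb / 2) ≤ N)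
    (v : ℕ → ℝ → Rd d → ℝ) (αn : ℕ → ℝ → Rd d → Rm m)
    (hαn0 : αn 0 = α0)
    (hαnS : ∀ n t x, αn (n+1) t x = α t x (dGrad d h (fun y => v n t y) x))
    (hvb : ∀ n, ∃ M, ∀ t x, |v n t x| ≤ M)
    (hvL : ∀ n, ∃ L, LipschitzWith (Real.toNNReal L) (fun p : ℝ × Rd d => v n p.1 p.2))
    (hvd : ∀ n x, ∀ t ∈ Set.Ioo (0:ℝ) T, DifferentiableAt ℝ (fun s => v n s x) t)
    (hpde : ∀ n x, ∀ t ∈ Set.Ioo (0:ℝ) T,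
      deriv (fun s => v n s x) t + c t x (αn n t x)
        + ⟪dGrad d h (fun y => v n t y) x, f t x (αn n t x)⟫
        = -(N * h * dLap d h (fun y => v n t y) x))
    (hterm : ∀ n x, v n T x = q x) :
    ∀ n, ∀ t ∈ Set.Icc (0:ℝ) T, ∀ x, v (n+1) t x ≤ v n t x := by
  intro n
  have hαnA : ∀ k t x, αn k t x ∈ A := by
    rintro (_ | k) t x
    · rw [hαn0]; exact hα0A t x
    · rw [hαnS]; exact hαA _ _ _
  have hN₁ : 1 ≤ N := (le_max_left _ _).trans hN
  have hf : ∀ t x i, |f t x (αn (n + 1) t x) i| ≤ 2 * N := fun t x i => by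
    have hFb := (le_max_right _ _).trans hN
    have hcoord := (PiLp.norm_apply_le (f t x (αn (n + 1) t x)) i).trans (hfb _ _ _)
    rw [Real.norm_eq_abs] at hcoord
    linarith
  have hcont : ∀ k x, Continuous fun t => v k t x := fun k x => by
    obtain ⟨L, hL⟩ := hvL k
    exact hL.continuous.comp (continuous_id.prodMk continuous_const)
  obtain ⟨M₁, hM₁⟩ := hvb (n + 1)
  obtain ⟨M₀, hM₀⟩ := hvb n
  have hw := le_zero_of_subsolution (w := fun t x => v (n + 1) t x - v n t x)
    (g := fun t x => f t x (αn (n + 1) t x)) hh.1 (by linarith) (by linarith) hf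
    ⟨M₁ + M₀, fun t x => by
      linarith [le_abs_self (v (n + 1) t x), neg_abs_le (v n t x), hM₁ t x, hM₀ t x]⟩
    (fun x => ((hcont _ x).sub (hcont _ x)).continuousOn)
    (fun x r hr => (hvd _ x r hr).sub (hvd _ x r hr)) ?_ (fun x => by simp [hterm])
  · exact fun t ht x => sub_nonpos.mp (hw t ht x)
  intro x r hr
  have hmin := hαmin r x (dGrad d h (fun y => v n r y) x) (αn n r x) (hαnA n r x)
  rw [← hαnS] at hmin
  rw [deriv_fun_sub (hvd _ x r hr) (hvd _ x r hr)]
  exact policy_improvement hmin (hpde (n + 1) x r hr) (hpde n x r hr)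

/-- Monotonicity of semi-discrete policy iteration (Proposition 2.1). -/
theorem semidiscrete_PI_monotone
    (T : ℝ) (hT : 1 ≤ T) (d m : ℕ)
    (A : Set (Rm m)) (hA : IsCompact A)
    (c : ℝ → Rd d → Rm m → ℝ) (f : ℝ → Rd d → Rm m → Rd d) (q : Rd d → ℝ)
    (α : ℝ → Rd d → Rd d → Rm m) (α0 : ℝ → Rd d → Rm m) (Cb Fb K : ℝ)
    (hcb : ∀ t x a, |c t x a| ≤ Cb)
    (hfb : ∀ t x a, ‖f t x a‖ ≤ Fb)
    (hqb : ∀ x, |q x| ≤ Cb)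
    (hcL : LipschitzWith (Real.toNNReal K) (fun p : ℝ × Rd d × Rm m => c p.1 p.2.1 p.2.2))
    (hfL : LipschitzWith (Real.toNNReal K) (fun p : ℝ × Rd d × Rm m => f p.1 p.2.1 p.2.2))
    (hqL : LipschitzWith (Real.toNNReal K) q)
    (hαA : ∀ t x p, α t x p ∈ A)
    (hαmin : ∀ t x p, ∀ a ∈ A, c t x (α t x p) + ⟪p, f t x (α t x p)⟫ ≤ c t x a + ⟪p, f t x a⟫)
    (hαL : LipschitzWith (Real.toNNReal K) (fun p : ℝ × Rd d × Rd d => α p.1 p.2.1 p.2.2))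
    (hα0A : ∀ t x, α0 t x ∈ A)
    (hα0L : LipschitzWith (Real.toNNReal K) (fun p : ℝ × Rd d => α0 p.1 p.2))
    (h N : ℝ) (hh : h ∈ Set.Ioo (0:ℝ) 1) (hN : max 1 (Fb / 2) ≤ N)
    (v : ℕ → ℝ → Rd d → ℝ) (αn : ℕ → ℝ → Rd d → Rm m)
    (hαn0 : αn 0 = α0)
    (hαnS : ∀ n t x, αn (n+1) t x = α t x (dGrad d h (fun y => v n t y) x))
    (hvb : ∀ n, ∃ M, ∀ t x, |v n t x| ≤ M)
    (hvL : ∀ n, ∃ L, LipschitzWith (Real.toNNReal L) (fun p : ℝ × Rd d => v n p.1 p.2))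
    (hvd : ∀ n x, ∀ t ∈ Set.Ioo (0:ℝ) T, DifferentiableAt ℝ (fun s => v n s x) t)
    (hpde : ∀ n x, ∀ t ∈ Set.Ioo (0:ℝ) T,
      deriv (fun s => v n s x) t + c t x (αn n t x)
        + ⟪dGrad d h (fun y => v n t y) x, f t x (αn n t x)⟫
        = -(N * h * dLap d h (fun y => v n t y) x))
    (hterm : ∀ n x, v n T x = q x) :
    ∀ n, ∀ t ∈ Set.Icc (0:ℝ) T, ∀ x, v (n+1) t x ≤ v n t x :=
  semidiscrete_PI_monotone_general T hT d m A c f q α α0 Fb hfb hαA hαmin hα0A h N hh hN v αn hαn0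
    hαnS hvb hvL hvd hpde hterm
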